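/- arXiv:1701.03054 — 4 statements merged into one kernel-verified Lean document; each statement's English description precedes it below -/
import Mathlib

section
/- Let β be a cardinal with 1 < β ≤ α and let G be one of the Grassmannians G_β(V) or G^β(V). If g : A → A' is a special bijection between two apartments of G, then g is adjacency preserving in both directions: for all X, Y ∈ A, X and Y are adjacent if and only if g(X) and g(Y) are adjacent. -/
/- Setting: `V` is a left vector space over a division ring `K` whose dimension
`α = Module.rank K V` is an infinite cardinal. -/

universe u v w

section Defs

variable (K : Type u) (V : Type v) [DivisionRing K] [AddCommGroup V] [Module K V]

/-- `B ⊆ V` is a basis of `V`, given as a set of vectors. -/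
def IsBasisSet (B : Set V) : Prop :=
  LinearIndependent K ((↑) : B → V) ∧ Submodule.span K B = ⊤

/-- The Grassmannian `G_β(V)`: all subspaces of dimension `β` and codimension `α`. -/
def Gsub (β : Cardinal.{v}) : Set (Submodule K V) :=
  {X | Module.rank K ↥X = β ∧ Module.rank K (V ⧸ X) = Module.rank K V}

/-- The Grassmannian `G^β(V)`: all subspaces of dimension `α` and codimension `β`. -/
def Gsup (β : Cardinal.{v}) : Set (Submodule K V) :=
  {X | Module.rank K ↥X = Module.rank K V ∧ Module.rank K (V ⧸ X) = β}

/-- The apartment of a Grassmannian `G` defined by a basis `B`: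
all elements of `G` spanned by subsets of `B`. -/
def apartmentOf (G : Set (Submodule K V)) (B : Set V) : Set (Submodule K V) :=
  {X | X ∈ G ∧ ∃ S ⊆ B, X = Submodule.span K S}

/-- `X` and `Y` are adjacent: `X ∩ Y` has codimension 1 in both `X` and `Y`,
i.e. `dim X/(X∩Y) = dim Y/(X∩Y) = 1`. -/
def AdjacentSub (X Y : Submodule K V) : Prop :=
  Module.rank K (↥X ⧸ Submodule.comap X.subtype (X ⊓ Y)) = 1 ∧
  Module.rank K (↥Y ⧸ Submodule.comap Y.subtype (X ⊓ Y)) = 1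

/-- `A` is an apartment of the Grassmannian `G`. -/
def IsApartment (G : Set (Submodule K V)) (A : Set (Submodule K V)) : Prop :=
  ∃ B : Set V, IsBasisSet K V B ∧ A = apartmentOf K V G B

/-- A subset `X` of an apartment `A` of `G` is inexact if some apartment of `G`
distinct from `A` contains it. -/
def Inexact (G : Set (Submodule K V)) (A X : Set (Submodule K V)) : Prop :=
  ∃ A' : Set (Submodule K V), IsApartment K V G A' ∧ A' ≠ A ∧ X ⊆ A'

end Defs

variable {K : Type u} {V : Type v} [DivisionRing K] [AddCommGroup V] [Module K V]

/-!
The maximal inexact subsets of the apartment `A` of a basis `B` are exactly the sets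
`A_bc = {Z ∈ A | b ∈ Z → c ∈ Z}` for distinct `b, c ∈ B`. Each `A_bc` is inexact because the
transvection `b ↦ b + c` fixes all its members, so the apartment of the transformed basis contains
it. Conversely, if an inexact subset lies in no `A_bc`, the line `K ∙ b` is the intersection of
its members through `b`, for every `b ∈ B`; read in a second apartment containing the subset, this
makes the two bases have the same lines, hence the two apartments coincide.

A special bijection preserves inexactness and inclusion of subsets in both directions, so it maps
the maximal inexact subsets of `A` onto those of `A'` and preserves every relation defined from
the incidence between an apartment and its maximal inexact subsets. Since `Z ∉ A_bc` means
`b ∈ Z` and `c ∉ Z`, adjacency is such a relation.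
-/

open Submodule Set Cardinal

section Incidence

variable {α β : Type*}

theorem Maximal.image_of_invOn {f : α → β} {f' : β → α} {s : Set α} {t : Set β}
    {P : Set α → Prop} {Q : Set β → Prop} (hinv : InvOn f' f s t)
    (hP : ∀ X, P X → X ⊆ s) (hQ : ∀ Y, Q Y → Y ⊆ t)
    (hPQ : ∀ X, P X → Q (f '' X)) (hQP : ∀ Y, Q Y → P (f' '' Y))
    {X : Set α} (hX : Maximal P X) : Maximal Q (f '' X) := by
  refine ⟨hPQ X hX.1, fun Y hY hXY => ?_⟩
  have hX' : X ⊆ f' '' Y := by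
    simpa only [hinv.1.image_image' (hP X hX.1)] using image_mono (f := f') hXY
  rw [← hinv.2.image_image' (hQ Y hY)]
  exact image_mono (hX.2 (hQP Y hY) hX')

theorem image_setOf_maximal_of_invOn {f : α → β} {f' : β → α} {s : Set α} {t : Set β}
    {P : Set α → Prop} {Q : Set β → Prop} (hinv : InvOn f' f s t)
    (hP : ∀ X, P X → X ⊆ s) (hQ : ∀ Y, Q Y → Y ⊆ t)
    (hPQ : ∀ X, P X → Q (f '' X)) (hQP : ∀ Y, Q Y → P (f' '' Y)) :
    (f '' ·) '' {X | Maximal P X} = {Y | Maximal Q Y} := by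
  refine Subset.antisymm ?_ fun Y hY => ⟨f' '' Y, ?_, hinv.2.image_image' (hQ Y hY.1)⟩
  · rintro _ ⟨X, hX, rfl⟩
    exact hX.image_of_invOn hinv hP hQ hPQ hQP
  · exact hY.image_of_invOn hinv.symm hQ hP hQP hPQ

/-- On an apartment with its maximal inexact subsets `A_bc`, the first clause with `M = A_bc` and
`N = A_b'c'` forces every basis vector in `X` but not in `Y` to be `c'`, and every one in `Y` but
not in `X` to be `c`; the second clause makes both kinds exist. -/
def IncidenceAdj (A : Set α) (𝓜 : Set (Set α)) (X Y : α) : Prop :=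
  (∃ M ∈ 𝓜, ∃ N ∈ 𝓜, X ∉ M ∧ Y ∉ N ∧ ∀ L ∈ 𝓜,
    (∃ Z ∈ A, Z ∉ L ∧ Z ∉ M) → (∃ Z ∈ A, Z ∉ L ∧ Z ∉ N) → (X ∈ L ↔ Y ∈ L)) ∧
  ∃ M ∈ 𝓜, ∃ N ∈ 𝓜, X ∉ M ∧ Y ∈ M ∧ Y ∉ N ∧ X ∈ N ∧ ∃ Z ∈ A, Z ∉ M ∧ Z ∉ N

theorem incidenceAdj_image_iff {f : α → β} {A : Set α} {𝓜 : Set (Set α)} (hf : InjOn f A)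
    (h𝓜 : ∀ M ∈ 𝓜, M ⊆ A) {X Y : α} (hX : X ∈ A) (hY : Y ∈ A) :
    IncidenceAdj (f '' A) ((f '' ·) '' 𝓜) (f X) (f Y) ↔ IncidenceAdj A 𝓜 X Y := by
  have hmem : ∀ M ∈ 𝓜, ∀ Z ∈ A, f Z ∈ f '' M ↔ Z ∈ M :=
    fun M hM Z hZ => hf.mem_image_iff (h𝓜 M hM) hZ
  have hmeet : ∀ M ∈ 𝓜, ∀ N ∈ 𝓜,
      (∃ Z ∈ A, f Z ∉ f '' M ∧ f Z ∉ f '' N) ↔ ∃ Z ∈ A, Z ∉ M ∧ Z ∉ N :=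
    fun M hM N hN => exists_congr fun Z => and_congr_right fun hZ => by
      rw [hmem M hM Z hZ, hmem N hN Z hZ]
  simp only [IncidenceAdj, exists_mem_image, forall_mem_image]
  refine and_congr (exists_congr fun M => and_congr_right fun hM =>
      exists_congr fun N => and_congr_right fun hN => ?_)
    (exists_congr fun M => and_congr_right fun hM =>
      exists_congr fun N => and_congr_right fun hN => ?_)
  · simp +contextual only [hmem, hmeet, hM, hN, hX, hY]
  · simp only [hmem M hM, hmem N hN, hmeet M hM N hN, hX, hY]

end Incidence

namespace IsBasisSet

variable {B : Set V}

noncomputable def toBasis (hB : IsBasisSet K V B) : Module.Basis B K V :=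
  Module.Basis.mk hB.1 (by rw [Subtype.range_coe]; exact hB.2.ge)

@[simp]
theorem toBasis_apply (hB : IsBasisSet K V B) (i : B) : hB.toBasis i = i := by
  simp [toBasis]

theorem mk_eq_rank (hB : IsBasisSet K V B) : #B = Module.rank K V :=
  hB.toBasis.mk_eq_rank''

theorem linearIndepOn (hB : IsBasisSet K V B) : LinearIndepOn K id B :=
  hB.1

theorem image (hB : IsBasisSet K V B) (e : V ≃ₗ[K] V) :
    IsBasisSet K V (e '' B) :=
  ⟨(show LinearIndepOn K e B from hB.1.map' e.toLinearMap e.ker).id_image, by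
    rw [span_image_linearEquiv, hB.2, Submodule.map_top, LinearEquiv.range]⟩

theorem repr_self (hB : IsBasisSet K V B) {x : V} (hx : x ∈ B) :
    hB.toBasis.repr x ⟨x, hx⟩ = 1 := by
  classical
  simpa using hB.toBasis.repr_self_apply ⟨x, hx⟩ ⟨x, hx⟩

theorem repr_of_ne (hB : IsBasisSet K V B) {x y : V} (hx : x ∈ B)
    (hy : y ∈ B) (hxy : x ≠ y) : hB.toBasis.repr x ⟨y, hy⟩ = 0 := by
  classical
  simpa [Subtype.ext_iff, hxy] using hB.toBasis.repr_self_apply ⟨x, hx⟩ ⟨y, hy⟩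

theorem mem_span_iff (hB : IsBasisSet K V B) {S : Set V} (hS : S ⊆ B) {x : V} :
    x ∈ span K S ↔ ∀ i : B, hB.toBasis.repr x i ≠ 0 → (i : V) ∈ S := by
  have hSB : hB.toBasis '' (Subtype.val ⁻¹' S) = S := by
    simpa using hS
  conv_lhs => rw [← hSB, Module.Basis.mem_span_image]
  exact ⟨fun h i hi => h (Finsupp.mem_support_iff.2 hi),
    fun h i hi => h i (Finsupp.mem_support_iff.1 hi)⟩

theorem mem_span_iff_of_mem (hB : IsBasisSet K V B) {S : Set V} (hS : S ⊆ B) {b : V}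
    (hb : b ∈ B) : b ∈ span K S ↔ b ∈ S := by
  rw [(hB.linearIndepOn.mono hS).mem_span_iff_id]
  exact ⟨fun h => h (hB.linearIndepOn.mono (insert_subset hb hS)), fun h _ => h⟩

theorem inter_span (hB : IsBasisSet K V B) {S : Set V} (hS : S ⊆ B) :
    B ∩ span K S = S :=
  Subset.antisymm (fun _ ⟨hb, h⟩ => (hB.mem_span_iff_of_mem hS hb).1 h)
    fun _ hx => ⟨hS hx, subset_span hx⟩

theorem span_inter (hB : IsBasisSet K V B) {S T : Set V} (hS : S ⊆ B) (hT : T ⊆ B) :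
    span K (S ∩ T) = span K S ⊓ span K T := by
  refine le_antisymm (le_inf (span_mono inter_subset_left) (span_mono inter_subset_right))
    fun x hx => ?_
  rw [mem_inf, hB.mem_span_iff hS, hB.mem_span_iff hT] at hx
  rw [hB.mem_span_iff (inter_subset_left.trans hS)]
  exact fun i hi => ⟨hx.1 i hi, hx.2 i hi⟩

theorem span_inter_iInf (hB : IsBasisSet K V B) {ι : Sort*} {Z : ι → Submodule K V}
    (hZ : ∀ i, span K (B ∩ Z i) = Z i) : span K (B ∩ ↑(⨅ i, Z i)) = ⨅ i, Z i := by
  refine le_antisymm (span_le.2 inter_subset_right) fun x hx => ?_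
  rw [hB.mem_span_iff inter_subset_left]
  intro j hj
  refine ⟨j.2, mem_iInf _ |>.2 fun i => ?_⟩
  have hxi := mem_iInf _ |>.1 hx i
  rw [← hZ i, hB.mem_span_iff inter_subset_left] at hxi
  exact (hxi j hj).2

theorem isCompl_span_sdiff (hB : IsBasisSet K V B) {S : Set V} (hS : S ⊆ B) :
    IsCompl (span K S) (span K (B \ S)) := by
  refine ⟨?_, ?_⟩
  · rw [disjoint_iff, ← hB.span_inter hS sdiff_subset, inter_sdiff_self, span_empty]
  · rw [codisjoint_iff, ← span_union, union_sdiff_cancel hS, hB.2]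

theorem rank_span (hB : IsBasisSet K V B) {S : Set V} (hS : S ⊆ B) :
    Module.rank K (span K S) = #S :=
  rank_span_set (hB.linearIndepOn.mono hS)

theorem rank_quotient_span (hB : IsBasisSet K V B) {S : Set V} (hS : S ⊆ B) :
    Module.rank K (V ⧸ span K S) = #(B \ S : Set V) := by
  rw [(quotientEquivOfIsCompl _ _ (hB.isCompl_span_sdiff hS)).rank_eq,
    hB.rank_span sdiff_subset]

theorem rank_quotient_inf (hB : IsBasisSet K V B) {S T : Set V} (hS : S ⊆ B) (hT : T ⊆ B) :
    Module.rank K (span K S ⧸ comap (span K S).subtype (span K S ⊓ span K T)) =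
      #(S \ T : Set V) := by
  have hST : S ∩ T ⊆ B := inter_subset_left.trans hS
  have hcompl := isCompl_comap_subtype_of_isCompl_of_le (p := span K S)
    (hB.isCompl_span_sdiff hST) (span_mono inter_subset_left)
  have hdiff : S ∩ (B \ (S ∩ T)) = S \ T := by
    ext x
    have := @hS x
    simp only [mem_inter_iff, mem_sdiff]
    tauto
  rw [← hB.span_inter hS hT, (quotientEquivOfIsCompl _ _ hcompl).rank_eq,
    (equivMapOfInjective _ (span K S).injective_subtype _).rank_eq, map_comap_subtype,
    ← hB.span_inter hS sdiff_subset, hdiff, hB.rank_span (sdiff_subset.trans hS)]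

theorem adjacentSub_span_iff (hB : IsBasisSet K V B) {S T : Set V} (hS : S ⊆ B) (hT : T ⊆ B) :
    AdjacentSub K V (span K S) (span K T) ↔ (∃ u, S \ T = {u}) ∧ ∃ v, T \ S = {v} := by
  rw [AdjacentSub, hB.rank_quotient_inf hS hT, inf_comm, hB.rank_quotient_inf hT hS,
    mk_set_eq_one_iff, mk_set_eq_one_iff]

end IsBasisSet

section CardinalLemmas

variable {α : Type*}

theorem Cardinal.exists_subset_mk_eq_mk_sdiff_eq {W : Set α} (hW : ℵ₀ ≤ #W) :
    ∃ T ⊆ W, #T = #W ∧ #(W \ T : Set α) = #W := by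
  obtain ⟨e⟩ : Nonempty (W ⊕ W ≃ W) := Cardinal.eq.1 (by simp [add_eq_self hW])
  have hinj : ∀ f : W → W ⊕ W, Function.Injective f →
      #(range fun x => (e (f x) : α)) = #W := fun f hf =>
    mk_range_eq _ (Subtype.val_injective.comp (e.injective.comp hf))
  refine ⟨range fun x => (e (.inl x) : α), ?_, hinj _ Sum.inl_injective, le_antisymm
    (mk_le_mk_of_subset sdiff_subset) ((hinj _ Sum.inr_injective).ge.trans (mk_le_mk_of_subset ?_))⟩
  · rintro _ ⟨x, rfl⟩
    exact (e _).2
  · rintro _ ⟨x, rfl⟩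
    refine ⟨(e _).2, ?_⟩
    rintro ⟨y, hy⟩
    simpa using e.injective (Subtype.ext hy)

theorem Cardinal.exists_subset_mk_eq_of_le {W : Set α} (hW : ℵ₀ ≤ #W) {κ : Cardinal}
    (hκ : κ ≤ #W) : ∃ T ⊆ W, #T = κ ∧ #(W \ T : Set α) = #W := by
  obtain ⟨T₁, hT₁W, hT₁, hWT₁⟩ := exists_subset_mk_eq_mk_sdiff_eq hW
  obtain ⟨T, hTT₁, hT⟩ := le_mk_iff_exists_subset.1 (hT₁ ▸ hκ)
  exact ⟨T, hTT₁.trans hT₁W, hT, le_antisymm (mk_le_mk_of_subset sdiff_subset)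
    (hWT₁.ge.trans (mk_le_mk_of_subset (sdiff_subset_sdiff_right hTT₁)))⟩

theorem Cardinal.exists_subset_between {B I O : Set α} (hB : ℵ₀ ≤ #B) (hIB : I ⊆ B)
    (hOB : O ⊆ B) (hIO : Disjoint I O) (hI : I.Finite) (hO : O.Finite) {κ : Cardinal}
    (hIκ : #I ≤ κ) (hκ : κ ≤ #B) :
    ∃ S ⊆ B, I ⊆ S ∧ Disjoint S O ∧ #S = κ ∧ #(B \ S : Set α) = #B := by
  set W := B \ (I ∪ O)
  have hW : #W = #B := eq_of_add_eq_of_aleph0_le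
    (by rw [add_comm, mk_sdiff_add_mk (union_subset hIB hOB)])
    ((hI.union hO).lt_aleph0.trans_le hB) hB
  obtain ⟨δ, rfl⟩ := exists_add_of_le hIκ
  obtain ⟨T, hTW, hT, hWT⟩ :=
    exists_subset_mk_eq_of_le (hW ▸ hB) (hW ▸ (self_le_add_left δ _).trans hκ)
  have hIT : Disjoint I T := disjoint_left.2 fun x hxI hxT => (hTW hxT).2 (.inl hxI)
  refine ⟨I ∪ T, union_subset hIB fun x hx => (hTW hx).1, subset_union_left,
    disjoint_union_left.2 ⟨hIO, disjoint_left.2 fun x hxT hxO => (hTW hxT).2 (.inr hxO)⟩,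
    by rw [mk_union_of_disjoint hIT, hT], le_antisymm (mk_le_mk_of_subset sdiff_subset) ?_⟩
  rw [← hW, ← hWT]
  refine mk_le_mk_of_subset fun x ⟨⟨hxB, hxIO⟩, hxT⟩ => ⟨hxB, ?_⟩
  rintro (hxI | hxT')
  exacts [hxIO (.inl hxI), hxT hxT']

end CardinalLemmas

def IsInfiniteGrassmannian (G : Set (Submodule K V)) : Prop :=
  ℵ₀ ≤ Module.rank K V ∧
    ∃ β, 1 < β ∧ β ≤ Module.rank K V ∧ (G = Gsub K V β ∨ G = Gsup K V β)

section Apartment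

variable {G : Set (Submodule K V)} {B : Set V}

theorem IsBasisSet.mem_apartmentOf_iff (hB : IsBasisSet K V B) {Z : Submodule K V} :
    Z ∈ apartmentOf K V G B ↔ Z ∈ G ∧ span K (B ∩ Z) = Z := by
  refine ⟨?_, fun ⟨hZ, h⟩ => ⟨hZ, B ∩ Z, inter_subset_left, h.symm⟩⟩
  rintro ⟨hZ, S, hS, rfl⟩
  rw [hB.inter_span hS]
  exact ⟨hZ, rfl⟩

theorem IsBasisSet.span_mem_Gsub_iff (hB : IsBasisSet K V B) {S : Set V} (hS : S ⊆ B)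
    {β : Cardinal} : span K S ∈ Gsub K V β ↔ #S = β ∧ #(B \ S : Set V) = #B := by
  rw [Gsub, mem_ofPred_eq, hB.rank_span hS, hB.rank_quotient_span hS, hB.mk_eq_rank]

theorem IsBasisSet.span_mem_Gsup_iff (hB : IsBasisSet K V B) {S : Set V} (hS : S ⊆ B)
    {β : Cardinal} : span K S ∈ Gsup K V β ↔ #S = #B ∧ #(B \ S : Set V) = β := by
  rw [Gsup, mem_ofPred_eq, hB.rank_span hS, hB.rank_quotient_span hS, hB.mk_eq_rank]

theorem IsInfiniteGrassmannian.nontrivial (hG : IsInfiniteGrassmannian G)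
    (hB : IsBasisSet K V B) {Z : Submodule K V} (hZ : Z ∈ apartmentOf K V G B) :
    (B ∩ Z).Nontrivial ∧ (B \ Z).Nontrivial := by
  obtain ⟨hα, β, hβ1, -, hG⟩ := hG
  rw [hB.mem_apartmentOf_iff] at hZ
  obtain ⟨hZG, hZ⟩ := hZ
  have hBZ : B \ (B ∩ Z : Set V) = B \ Z := sdiff_self_inter
  have h1B : 1 < #B := one_lt_aleph0.trans_le (hB.mk_eq_rank ▸ hα)
  simp only [← nontrivial_coe_sort, ← one_lt_iff_nontrivial, ← hBZ]
  rcases hG with rfl | rfl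
  · rw [← hZ, hB.span_mem_Gsub_iff inter_subset_left] at hZG
    rw [hZG.1, hZG.2]
    exact ⟨hβ1, h1B⟩
  · rw [← hZ, hB.span_mem_Gsup_iff inter_subset_left] at hZG
    rw [hZG.1, hZG.2]
    exact ⟨h1B, hβ1⟩

theorem IsInfiniteGrassmannian.exists_span_mem (hG : IsInfiniteGrassmannian G)
    (hB : IsBasisSet K V B) {I O : Set V} (hIB : I ⊆ B) (hOB : O ⊆ B) (hIO : Disjoint I O)
    (hI : I.Finite) (hO : O.Finite) (hI2 : #I ≤ 2) (hO2 : #O ≤ 2) :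
    ∃ S ⊆ B, I ⊆ S ∧ Disjoint S O ∧ span K S ∈ G := by
  obtain ⟨hα, β, hβ1, hβ, hG⟩ := hG
  rw [← hB.mk_eq_rank] at hα hβ
  have h2β : 2 ≤ β := two_le_iff_one_lt.2 hβ1
  rcases hG with rfl | rfl
  · obtain ⟨S, hSB, hIS, hSO, hS, hBS⟩ :=
      exists_subset_between hα hIB hOB hIO hI hO (hI2.trans h2β) hβ
    exact ⟨S, hSB, hIS, hSO, (hB.span_mem_Gsub_iff hSB).2 ⟨hS, hBS⟩⟩
  · obtain ⟨S, hSB, hOS, hSI, hS, hBS⟩ :=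
      exists_subset_between hα hOB hIB hIO.symm hO hI (hO2.trans h2β) hβ
    refine ⟨B \ S, sdiff_subset, subset_sdiff.2 ⟨hIB, hSI.symm⟩,
      disjoint_sdiff_left.mono_right hOS, (hB.span_mem_Gsup_iff sdiff_subset).2 ⟨hBS, ?_⟩⟩
    rw [Set.sdiff_sdiff_right_self, inter_eq_right.2 hSB, hS]

theorem IsInfiniteGrassmannian.exists_mem_apartmentOf (hG : IsInfiniteGrassmannian G)
    (hB : IsBasisSet K V B) {x₁ x₂ y₁ y₂ : V} (hx₁ : x₁ ∈ B) (hx₂ : x₂ ∈ B) (hy₁ : y₁ ∈ B)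
    (hy₂ : y₂ ∈ B) (h₁₁ : x₁ ≠ y₁) (h₁₂ : x₁ ≠ y₂) (h₂₁ : x₂ ≠ y₁) (h₂₂ : x₂ ≠ y₂) :
    ∃ Z ∈ apartmentOf K V G B, x₁ ∈ Z ∧ x₂ ∈ Z ∧ y₁ ∉ Z ∧ y₂ ∉ Z := by
  have hcard : ∀ a b : V, #({a, b} : Set V) ≤ 2 := fun a b =>
    mk_insert_le.trans (by rw [mk_singleton]; norm_num)
  obtain ⟨S, hSB, hxS, hSy, hSG⟩ := hG.exists_span_mem hB (pair_subset hx₁ hx₂)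
    (pair_subset hy₁ hy₂) (by simp [h₁₁.symm, h₁₂.symm, h₂₁.symm, h₂₂.symm])
    (toFinite _) (toFinite _) (hcard _ _) (hcard _ _)
  obtain ⟨hx₁S, hx₂S⟩ := pair_subset_iff.1 hxS
  refine ⟨span K S, hB.mem_apartmentOf_iff.2 ⟨hSG, by rw [hB.inter_span hSB]⟩,
    subset_span hx₁S, subset_span hx₂S, ?_, ?_⟩ <;>
  rw [hB.mem_span_iff_of_mem hSB ‹_›] <;>
  exact fun h => hSy.notMem_of_mem_left h (by simp)

end Apartment

theorem LinearEquiv.map_transvection_eq {R M : Type*} [Ring R] [AddCommGroup M] [Module R M]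
    {f : Module.Dual R M} {v : M} (h : f v = 0) {W : Submodule R M}
    (hW : ∀ x ∈ W, f x • v ∈ W) : W.map (LinearEquiv.transvection h : M →ₗ[R] M) = W := by
  refine le_antisymm (map_le_iff_le_comap.2 fun x hx => W.add_mem hx (hW x hx))
    fun x hx => ⟨x - f x • v, W.sub_mem hx (hW x hx), ?_⟩
  rw [LinearEquiv.coe_coe, LinearEquiv.transvection.apply, map_sub, LinearMap.map_smul, h,
    smul_eq_mul, mul_zero, sub_zero, sub_add_cancel]

def pairSet (A : Set (Submodule K V)) (b c : V) : Set (Submodule K V) :=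
  {Z ∈ A | b ∈ Z → c ∈ Z}

def maxInexact (G A : Set (Submodule K V)) : Set (Set (Submodule K V)) :=
  {M | Maximal (fun M => M ⊆ A ∧ Inexact K V G A M) M}

section PairSet

variable {G A : Set (Submodule K V)} {B : Set V}

theorem mem_pairSet_iff {Z : Submodule K V} (hZ : Z ∈ A) {b c : V} :
    Z ∈ pairSet A b c ↔ (b ∈ Z → c ∈ Z) :=
  ⟨And.right, And.intro hZ⟩

theorem pairSet_subset (b c : V) : pairSet A b c ⊆ A :=
  sep_subset _ _

theorem IsInfiniteGrassmannian.exists_notMem_pairSet_iff (hG : IsInfiniteGrassmannian G)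
    (hB : IsBasisSet K V B) {b c d e : V} (hb : b ∈ B) (hc : c ∈ B) (hd : d ∈ B) (he : e ∈ B)
    (hbc : b ≠ c) (hde : d ≠ e) :
    (∃ Z ∈ apartmentOf K V G B,
      Z ∉ pairSet (apartmentOf K V G B) b c ∧ Z ∉ pairSet (apartmentOf K V G B) d e) ↔
      b ≠ e ∧ d ≠ c := by
  constructor
  · rintro ⟨Z, hZ, hZbc, hZde⟩
    simp only [mem_pairSet_iff hZ, Classical.not_imp] at hZbc hZde
    exact ⟨fun h => hZde.2 (h ▸ hZbc.1), fun h => hZbc.2 (h ▸ hZde.1)⟩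
  · rintro ⟨hbe, hdc⟩
    obtain ⟨Z, hZ, hbZ, hdZ, hcZ, heZ⟩ :=
      hG.exists_mem_apartmentOf hB hb hd hc he hbc hbe hdc hde
    exact ⟨Z, hZ, fun h => hcZ (h.2 hbZ), fun h => heZ (h.2 hdZ)⟩

theorem IsInfiniteGrassmannian.inexact_pairSet (hG : IsInfiniteGrassmannian G)
    (hB : IsBasisSet K V B) {b c : V} (hb : b ∈ B) (hc : c ∈ B) (hbc : b ≠ c) :
    Inexact K V G (apartmentOf K V G B) (pairSet (apartmentOf K V G B) b c) := by
  set f := hB.toBasis.coord ⟨b, hb⟩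
  have hf : ∀ x, f x = hB.toBasis.repr x ⟨b, hb⟩ := fun x => rfl
  have hfc : f c = 0 := hB.repr_of_ne hc hb hbc.symm
  set e := LinearEquiv.transvection hfc
  have he : ∀ x, e x = x + f x • c := LinearEquiv.transvection.apply hfc
  have hB' := hB.image e
  have hbB' : e b ∈ e '' B := mem_image_of_mem e hb
  have hcB' : c ∈ e '' B := ⟨c, hc, by rw [he, hfc, zero_smul, add_zero]⟩
  have hne : e b ≠ c := by
    rw [he, hf, hB.repr_self, one_smul]
    simpa using hB.1.ne_zero ⟨b, hb⟩
  refine ⟨apartmentOf K V G (e '' B), ⟨_, hB', rfl⟩, fun hA => ?_, ?_⟩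
  · -- a member of the new apartment containing `b + c` but not `c` is not spanned by vectors of `B`
    obtain ⟨Z, hZ, hbZ, -, hcZ, -⟩ :=
      hG.exists_mem_apartmentOf hB' hbB' hbB' hcB' hcB' hne hne hne hne
    rw [hA, hB.mem_apartmentOf_iff] at hZ
    rw [← hZ.2, hB.mem_span_iff inter_subset_left] at hbZ
    refine hcZ (hbZ ⟨c, hc⟩ ?_).2
    rw [he, map_add, map_smul, Finsupp.add_apply, Finsupp.smul_apply, hB.repr_self hc,
      hB.repr_of_ne hb hc hbc, hf, hB.repr_self hb]
    simp
  · rintro Z ⟨hZ, hbcZ⟩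
    obtain ⟨hZG, hZ⟩ := hB.mem_apartmentOf_iff.1 hZ
    refine ⟨hZG, e '' (B ∩ Z), image_mono inter_subset_left, ?_⟩
    rw [span_image_linearEquiv, hZ, LinearEquiv.map_transvection_eq]
    intro x hx
    by_cases hbZ : b ∈ Z
    · exact Z.smul_mem _ (hbcZ hbZ)
    · rw [← hZ, hB.mem_span_iff inter_subset_left] at hx
      rw [hf, not_imp_comm.1 (hx ⟨b, hb⟩) fun h => hbZ h.2, zero_smul]
      exact Z.zero_mem

end PairSet

section Classification

variable {G : Set (Submodule K V)} {B B₂ : Set V}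

theorem IsBasisSet.exists_span_singleton_eq (hB : IsBasisSet K V B) {x : V} (hx : x ≠ 0)
    (h : span K (B ∩ (K ∙ x)) = K ∙ x) : ∃ z ∈ B, K ∙ x = K ∙ z := by
  obtain ⟨z, hzB, hzx⟩ : (B ∩ (K ∙ x : Set V)).Nonempty := by
    by_contra! hempty
    rw [hempty, span_empty, eq_comm, span_singleton_eq_bot] at h
    exact hx h
  obtain ⟨a, rfl⟩ := mem_span_singleton.1 hzx
  have ha : a ≠ 0 := by
    rintro rfl
    exact hB.1.ne_zero ⟨_, hzB⟩ (zero_smul K x)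
  exact ⟨a • x, hzB, (span_singleton_smul_eq (Ne.isUnit ha) x).symm⟩

theorem mem_span_of_span_singleton_eq {b z : V} {S : Set V} (hz : z ∈ S) (h : K ∙ b = K ∙ z) :
    b ∈ span K S :=
  (span_singleton_le_iff_mem b _).1 (h ▸ (span_singleton_le_iff_mem z _).2 (subset_span hz))

theorem span_inter_le_of_forall_span_singleton_eq
    (h : ∀ b ∈ B, ∃ z ∈ B₂, K ∙ b = K ∙ z) (Z : Submodule K V) :
    span K (B ∩ Z) ≤ span K (B₂ ∩ Z) := by
  rw [span_le]
  rintro b ⟨hb, hbZ⟩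
  obtain ⟨z, hz, hbz⟩ := h b hb
  have hzZ : z ∈ Z :=
    (span_singleton_le_iff_mem z Z).1 (hbz ▸ (span_singleton_le_iff_mem b Z).2 hbZ)
  exact mem_span_of_span_singleton_eq ⟨hz, hzZ⟩ hbz

theorem IsBasisSet.apartmentOf_eq (hB : IsBasisSet K V B) (hB₂ : IsBasisSet K V B₂)
    (h : ∀ b ∈ B, ∃ z ∈ B₂, K ∙ b = K ∙ z) : apartmentOf K V G B = apartmentOf K V G B₂ := by
  have h₂ : ∀ z ∈ B₂, ∃ b ∈ B, K ∙ z = K ∙ b := by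
    by_contra! hz
    obtain ⟨z, hz, hzB⟩ := hz
    have hB_le : span K B ≤ span K (B₂ \ {z}) := span_le.2 fun b hb => by
      obtain ⟨z', hz', hbz'⟩ := h b hb
      have hz'z : z' ≠ z := by
        rintro rfl
        exact hzB b hb hbz'.symm
      exact mem_span_of_span_singleton_eq ⟨hz', hz'z⟩ hbz'
    have hz_mem : z ∈ span K (B₂ \ {z}) := hB_le (hB.2 ▸ mem_top)
    exact ((hB₂.mem_span_iff_of_mem sdiff_subset hz).1 hz_mem).2 rfl
  ext Z
  rw [hB.mem_apartmentOf_iff, hB₂.mem_apartmentOf_iff,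
    le_antisymm (span_inter_le_of_forall_span_singleton_eq h Z)
      (span_inter_le_of_forall_span_singleton_eq h₂ Z)]

theorem IsBasisSet.exists_subset_pairSet (hB : IsBasisSet K V B)
    {X : Set (Submodule K V)} (hXA : X ⊆ apartmentOf K V G B)
    (hX : Inexact K V G (apartmentOf K V G B) X) :
    ∃ b ∈ B, ∃ c ∈ B, b ≠ c ∧ X ⊆ pairSet (apartmentOf K V G B) b c := by
  obtain ⟨_, ⟨B₂, hB₂, rfl⟩, hne, hXA₂⟩ := hX
  by_contra! hsep
  refine hne (hB.apartmentOf_eq hB₂ fun b hb => ?_).symm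
  set L := ⨅ Z : {Z | Z ∈ X ∧ b ∈ Z}, (Z : Submodule K V)
  have hspan : ∀ {B' : Set V}, IsBasisSet K V B' → X ⊆ apartmentOf K V G B' →
      span K (B' ∩ L) = L := fun hB' hXA' =>
    hB'.span_inter_iInf fun Z => (hB'.mem_apartmentOf_iff.1 (hXA' Z.2.1)).2
  have hBL : B ∩ L = {b} := by
    refine Subset.antisymm ?_ (singleton_subset_iff.2 ⟨hb, mem_iInf _ |>.2 fun Z => Z.2.2⟩)
    rintro c ⟨hc, hcL⟩
    by_contra hcb
    obtain ⟨Z, hZX, hZ⟩ := not_subset.1 (hsep b hb c hc (Ne.symm hcb))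
    rw [mem_pairSet_iff (hXA hZX), Classical.not_imp] at hZ
    exact hZ.2 (mem_iInf _ |>.1 hcL ⟨Z, hZX, hZ.1⟩)
  have hL : span K {b} = L := hBL ▸ hspan hB hXA
  exact hB₂.exists_span_singleton_eq (hB.1.ne_zero ⟨b, hb⟩) (hL ▸ hspan hB₂ hXA₂)

theorem IsInfiniteGrassmannian.eq_of_pairSet_subset (hG : IsInfiniteGrassmannian G)
    (hB : IsBasisSet K V B) {b c d e : V} (hb : b ∈ B) (hc : c ∈ B) (hd : d ∈ B) (he : e ∈ B)
    (hde : d ≠ e)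
    (h : pairSet (apartmentOf K V G B) b c ⊆ pairSet (apartmentOf K V G B) d e) :
    b = d ∧ c = e := by
  have hdb : d = b := by
    by_contra hdb
    obtain ⟨Z, hZ, hdZ, -, heZ, hbZ⟩ := hG.exists_mem_apartmentOf hB hd hd he hb hde hdb hde hdb
    exact heZ ((h ⟨hZ, fun hbZ' => absurd hbZ' hbZ⟩).2 hdZ)
  subst hdb
  refine ⟨rfl, ?_⟩
  by_contra hce
  obtain ⟨Z, hZ, hdZ, hcZ, heZ, -⟩ := hG.exists_mem_apartmentOf hB hd hc he he hde hde hce hce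
  exact heZ ((h ⟨hZ, fun _ => hcZ⟩).2 hdZ)

theorem IsInfiniteGrassmannian.maximal_inexact_iff (hG : IsInfiniteGrassmannian G)
    (hB : IsBasisSet K V B) {M : Set (Submodule K V)} :
    M ∈ maxInexact G (apartmentOf K V G B) ↔
      ∃ b ∈ B, ∃ c ∈ B, b ≠ c ∧ pairSet (apartmentOf K V G B) b c = M := by
  constructor
  · rintro ⟨hM, hmax⟩
    obtain ⟨b, hb, c, hc, hbc, hMbc⟩ := hB.exists_subset_pairSet hM.1 hM.2
    exact ⟨b, hb, c, hc, hbc, Subset.antisymm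
      (hmax ⟨pairSet_subset b c, hG.inexact_pairSet hB hb hc hbc⟩ hMbc) hMbc⟩
  · rintro ⟨b, hb, c, hc, hbc, rfl⟩
    refine ⟨⟨pairSet_subset b c, hG.inexact_pairSet hB hb hc hbc⟩, fun N hN hbcN => ?_⟩
    obtain ⟨d, hd, e, he, hde, hNde⟩ := hB.exists_subset_pairSet hN.1 hN.2
    obtain ⟨rfl, rfl⟩ := hG.eq_of_pairSet_subset hB hb hc hd he hde (hbcN.trans hNde)
    exact hNde

end Classification

section Adjacency

variable {G : Set (Submodule K V)} {B : Set V} {X Y : Submodule K V}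

theorem IsBasisSet.adjacentSub_iff (hB : IsBasisSet K V B) (hX : X ∈ apartmentOf K V G B)
    (hY : Y ∈ apartmentOf K V G B) :
    AdjacentSub K V X Y ↔ (∃ u, (B ∩ X) \ Y = {u}) ∧ ∃ v, (B ∩ Y) \ X = {v} := by
  have hdiff : ∀ Z W : Submodule K V, (B ∩ Z) \ (B ∩ W : Set V) = (B ∩ Z) \ W := fun Z W => by
    ext
    simp only [mem_sdiff, mem_inter_iff, SetLike.mem_coe]
    tauto
  conv_lhs => rw [← (hB.mem_apartmentOf_iff.1 hX).2, ← (hB.mem_apartmentOf_iff.1 hY).2]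
  rw [hB.adjacentSub_span_iff inter_subset_left inter_subset_left, hdiff, hdiff]

theorem IsInfiniteGrassmannian.incidenceAdj_of_adjacentSub (hG : IsInfiniteGrassmannian G)
    (hB : IsBasisSet K V B) (hX : X ∈ apartmentOf K V G B) (hY : Y ∈ apartmentOf K V G B)
    (h : AdjacentSub K V X Y) :
    IncidenceAdj (apartmentOf K V G B)
      (maxInexact G (apartmentOf K V G B)) X Y := by
  obtain ⟨⟨u, hu⟩, ⟨v, hv⟩⟩ := (hB.adjacentSub_iff hX hY).1 h
  obtain ⟨⟨huB, huX⟩, huY⟩ : u ∈ (B ∩ X) \ Y := hu ▸ mem_singleton u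
  obtain ⟨⟨hvB, hvY⟩, hvX⟩ : v ∈ (B ∩ Y) \ X := hv ▸ mem_singleton v
  have huv : u ≠ v := fun h => hvX (h ▸ huX)
  have hagree : ∀ w ∈ B, w ≠ u → w ≠ v → (w ∈ X ↔ w ∈ Y) := fun w hw hwu hwv =>
    ⟨fun hwX => by_contra fun hwY => hwu (hu ▸ ⟨⟨hw, hwX⟩, hwY⟩ : w ∈ ({u} : Set V)),
      fun hwY => by_contra fun hwX => hwv (hv ▸ ⟨⟨hw, hwY⟩, hwX⟩ : w ∈ ({v} : Set V))⟩
  have hmax : ∀ {b c}, b ∈ B → c ∈ B → b ≠ c →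
      pairSet (apartmentOf K V G B) b c ∈ maxInexact G (apartmentOf K V G B) :=
    fun hb hc hbc => (hG.maximal_inexact_iff hB).2 ⟨_, hb, _, hc, hbc, rfl⟩
  refine ⟨⟨_, hmax huB hvB huv, _, hmax hvB huB huv.symm, fun h => hvX (h.2 huX),
    fun h => huY (h.2 hvY), fun L hL hLM hLN => ?_⟩, ?_⟩
  · obtain ⟨d, hd, e, he, hde, rfl⟩ := (hG.maximal_inexact_iff hB).1 hL
    rw [hG.exists_notMem_pairSet_iff hB hd he huB hvB hde huv] at hLM
    rw [hG.exists_notMem_pairSet_iff hB hd he hvB huB hde huv.symm] at hLN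
    rw [mem_pairSet_iff hX, mem_pairSet_iff hY, hagree d hd hLN.1 hLM.1,
      hagree e he hLM.2.symm hLN.2.symm]
  · obtain ⟨x, ⟨hxB, hxX⟩, hxu⟩ := (hG.nontrivial hB hX).1.exists_ne u
    have hxv : x ≠ v := fun h => hvX (h ▸ hxX)
    have hxY : x ∈ Y := (hagree x hxB hxu hxv).1 hxX
    exact ⟨_, hmax hxB hvB hxv, _, hmax hxB huB hxu, fun h => hvX (h.2 hxX),
      (mem_pairSet_iff hY).2 fun _ => hvY, fun h => huY (h.2 hxY),
      (mem_pairSet_iff hX).2 fun _ => huX,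
      (hG.exists_notMem_pairSet_iff hB hxB hvB hxB huB hxv hxu).2 ⟨hxu, hxv⟩⟩

theorem IsInfiniteGrassmannian.eq_of_mem_of_notMem (hG : IsInfiniteGrassmannian G)
    (hB : IsBasisSet K V B) (hX : X ∈ apartmentOf K V G B) {b c b' c' : V} (hbX : b ∈ X)
    (hcX : c ∉ X)
    (hpair : ∀ d ∈ B, ∀ e ∈ B, d ≠ e → d ≠ c → b ≠ e → d ≠ c' → b' ≠ e →
      ((d ∈ X → e ∈ X) ↔ (d ∈ Y → e ∈ Y)))
    {d : V} (hd : d ∈ B) (hdX : d ∈ X) (hdY : d ∉ Y) : d = c' := by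
  by_contra hdc'
  obtain ⟨e, ⟨he, heX⟩, heb'⟩ := (hG.nontrivial hB hX).2.exists_ne b'
  have := hpair d hd e he (fun h => heX (h ▸ hdX)) (fun h => hcX (h ▸ hdX))
    (fun h => heX (h ▸ hbX)) hdc' (Ne.symm heb')
  exact hdY (Classical.not_imp.1 (mt this.2 fun h => heX (h hdX))).1

theorem exists_mem_notMem_of_pairs {c b₂ c₂ b₃ c₃ : V}
    (hYX : ∀ d ∈ B, d ∈ Y → d ∉ X → d = c) (hb₂ : b₂ ∈ B) (hc₂ : c₂ ∈ B) (hb₃ : b₃ ∈ B)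
    (hc₃ : c₃ ∈ B) (hb₂X : b₂ ∈ X) (hc₂X : c₂ ∉ X) (h₂Y : b₂ ∈ Y → c₂ ∈ Y) (hb₃Y : b₃ ∈ Y)
    (hc₃Y : c₃ ∉ Y) (h₃X : b₃ ∈ X → c₃ ∈ X) (hb₃c₂ : b₃ ≠ c₂) :
    ∃ w ∈ B, w ∈ X ∧ w ∉ Y := by
  by_contra! hXY
  have hb₃X : b₃ ∉ X := fun h => hc₃Y (hXY c₃ hc₃ (h₃X h))
  exact hb₃c₂ ((hYX b₃ hb₃ hb₃Y hb₃X).trans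
    (hYX c₂ hc₂ (h₂Y (hXY b₂ hb₂ hb₂X)) hc₂X).symm)

theorem IsInfiniteGrassmannian.adjacentSub_of_incidenceAdj (hG : IsInfiniteGrassmannian G)
    (hB : IsBasisSet K V B) (hX : X ∈ apartmentOf K V G B) (hY : Y ∈ apartmentOf K V G B)
    (h : IncidenceAdj (apartmentOf K V G B)
      (maxInexact G (apartmentOf K V G B)) X Y) :
    AdjacentSub K V X Y := by
  obtain ⟨⟨M, hM, N, hN, hXM, hYN, hsep⟩, M₂, hM₂, N₂, hN₂, hXM₂, hYM₂, hYN₂, hXN₂, hM₂N₂⟩ := h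
  obtain ⟨b, hb, c, hc, hbc, rfl⟩ := (hG.maximal_inexact_iff hB).1 hM
  obtain ⟨b', hb', c', hc', hb'c', rfl⟩ := (hG.maximal_inexact_iff hB).1 hN
  obtain ⟨b₂, hb₂, c₂, hc₂, hb₂c₂, rfl⟩ := (hG.maximal_inexact_iff hB).1 hM₂
  obtain ⟨b₃, hb₃, c₃, hc₃, hb₃c₃, rfl⟩ := (hG.maximal_inexact_iff hB).1 hN₂
  rw [hG.exists_notMem_pairSet_iff hB hb₂ hc₂ hb₃ hc₃ hb₂c₂ hb₃c₃] at hM₂N₂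
  simp only [mem_pairSet_iff hX, mem_pairSet_iff hY, Classical.not_imp]
    at hXM hYN hXM₂ hYM₂ hYN₂ hXN₂
  have hpair : ∀ d ∈ B, ∀ e ∈ B, d ≠ e → d ≠ c → b ≠ e → d ≠ c' → b' ≠ e →
      ((d ∈ X → e ∈ X) ↔ (d ∈ Y → e ∈ Y)) := fun d hd e he hde hdc hbe hdc' hb'e => by
    simpa only [mem_pairSet_iff hX, mem_pairSet_iff hY] using
      hsep _ ((hG.maximal_inexact_iff hB).2 ⟨d, hd, e, he, hde, rfl⟩)
        ((hG.exists_notMem_pairSet_iff hB hd he hb hc hde hbc).2 ⟨hdc, hbe⟩)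
        ((hG.exists_notMem_pairSet_iff hB hd he hb' hc' hde hb'c').2 ⟨hdc', hb'e⟩)
  have hXY : ∀ d ∈ B, d ∈ X → d ∉ Y → d = c' :=
    fun d hd => hG.eq_of_mem_of_notMem hB hX hXM.1 hXM.2 hpair hd
  have hYX : ∀ d ∈ B, d ∈ Y → d ∉ X → d = c :=
    fun d hd => hG.eq_of_mem_of_notMem hB hY hYN.1 hYN.2
      (fun d hd e he hde hdc' hb'e hdc hbe => (hpair d hd e he hde hdc hbe hdc' hb'e).symm) hd
  obtain ⟨w, hw, hwX, hwY⟩ := exists_mem_notMem_of_pairs hYX hb₂ hc₂ hb₃ hc₃ hXM₂.1 hXM₂.2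
    hYM₂ hYN₂.1 hYN₂.2 hXN₂ hM₂N₂.2
  obtain ⟨w', hw', hw'Y, hw'X⟩ := exists_mem_notMem_of_pairs hXY hb₃ hc₃ hb₂ hc₂ hYN₂.1 hYN₂.2
    hXN₂ hXM₂.1 hXM₂.2 hYM₂ hM₂N₂.1
  rw [hB.adjacentSub_iff hX hY]
  exact ⟨⟨c', eq_singleton_iff_nonempty_unique_mem.2 ⟨⟨w, ⟨hw, hwX⟩, hwY⟩,
      fun d ⟨⟨hd, hdX⟩, hdY⟩ => hXY d hd hdX hdY⟩⟩,
    ⟨c, eq_singleton_iff_nonempty_unique_mem.2 ⟨⟨w', ⟨hw', hw'Y⟩, hw'X⟩,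
      fun d ⟨⟨hd, hdY⟩, hdX⟩ => hYX d hd hdY hdX⟩⟩⟩

theorem IsInfiniteGrassmannian.adjacentSub_iff_incidenceAdj (hG : IsInfiniteGrassmannian G)
    (hB : IsBasisSet K V B) (hX : X ∈ apartmentOf K V G B) (hY : Y ∈ apartmentOf K V G B) :
    AdjacentSub K V X Y ↔
      IncidenceAdj (apartmentOf K V G B) (maxInexact G (apartmentOf K V G B)) X Y :=
  ⟨hG.incidenceAdj_of_adjacentSub hB hX hY, hG.adjacentSub_of_incidenceAdj hB hX hY⟩

end Adjacency

/-- Lemma 2, first part: a special bijection between apartments of `G` is adjacency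
preserving in both directions. -/
theorem stmt7 (hα : Cardinal.aleph0 ≤ Module.rank K V)
    (β : Cardinal.{v}) (hβ1 : 1 < β) (hβ : β ≤ Module.rank K V)
    (G : Set (Submodule K V)) (hG : G = Gsub K V β ∨ G = Gsup K V β)
    (A A' : Set (Submodule K V))
    (hA : IsApartment K V G A) (hA' : IsApartment K V G A')
    (g g' : Submodule K V → Submodule K V)
    (hbij : Set.BijOn g A A') (hinv : Set.InvOn g' g A A')
    (hsp : ∀ X ⊆ A, Inexact K V G A X → Inexact K V G A' (g '' X))
    (hsp' : ∀ Y ⊆ A', Inexact K V G A' Y → Inexact K V G A (g' '' Y)) :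
    ∀ X ∈ A, ∀ Y ∈ A, (AdjacentSub K V X Y ↔ AdjacentSub K V (g X) (g Y)) := by
  have hG' : IsInfiniteGrassmannian G := ⟨hα, β, hβ1, hβ, hG⟩
  obtain ⟨B, hB, rfl⟩ := hA
  obtain ⟨B', hB', rfl⟩ := hA'
  intro X hX Y hY
  have hmax : (g '' ·) '' maxInexact G (apartmentOf K V G B) =
      maxInexact G (apartmentOf K V G B') :=
    image_setOf_maximal_of_invOn hinv (fun _ h => h.1) (fun _ h => h.1)
      (fun M hM => ⟨(hbij.mapsTo.mono_left hM.1).image_subset, hsp M hM.1 hM.2⟩)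
      (fun M hM => ⟨((hbij.symm hinv.symm).mapsTo.mono_left hM.1).image_subset,
        hsp' M hM.1 hM.2⟩)
  rw [hG'.adjacentSub_iff_incidenceAdj hB hX hY,
    hG'.adjacentSub_iff_incidenceAdj hB' (hbij.mapsTo hX) (hbij.mapsTo hY), ← hmax,
    ← hbij.image_eq, incidenceAdj_image_iff hbij.injOn (fun M hM => hM.1.1) hX hY]
end

section
/- Let β ≤ α be an infinite cardinal, let G be one of the Grassmannians G_β(V) or G^β(V), and let f : G → G be a bijection. Suppose that for every X ∈ G there is a semilinear isomorphism l_X : X → f(X) such that l_X(Z) = f(Z) for every Z ∈ G with Z ⊆ X. Then for all X, Y ∈ G with X ∩ Y ≠ 0 and every 1-dimensional subspace P ⊆ X ∩ Y, one has l_X(P) = l_Y(P). -/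
/- Setting: `V` is a left vector space over a division ring `K` whose dimension
`α = Module.rank K V` is an infinite cardinal. -/

universe u v w

variable {K : Type u} {V : Type v} [DivisionRing K] [AddCommGroup V] [Module K V]

/-!
If `Z₀ ∈ G` and `P ≤ Z₀`, then `P` is the intersection of the members of `G` lying between `P`
and `Z₀`: cutting a line out of the infinite-dimensional `Z₀` changes neither its dimension nor
its codimension. Since `l_X` is injective and maps each such member `Z` onto `f Z`, `l_X(P)` is
the intersection of these `f Z` whenever `Z₀ ≤ X`, a set not involving `X`. Hence
`l_X(P) = l_U(P)` as soon as `P ≤ X ⊓ U ∈ G`, and it remains to find `U ∈ G` containing `X ⊓ Y`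
with `X ⊓ U, Y ⊓ U ∈ G`: take `X ⊔ Y` in `G_β` for `β < α`, `X ⊓ Y` if it has dimension `α`, and
otherwise (then `β = α`) `D₁ ⊔ Y`, where `D₁, D₂` split a complement of `X ⊓ Y` in `X` into two
halves of dimension `α`; the half `D₂` meets `D₁ ⊔ Y` trivially and so keeps its codimension `α`.
-/

open Cardinal Submodule

section Rank

theorem rank_sup_of_disjoint {A B : Submodule K V} (h : Disjoint A B) :
    Module.rank K ↥(A ⊔ B) = Module.rank K A + Module.rank K B := by
  have := rank_sup_add_rank_inf_eq A B
  rwa [h.eq_bot, rank_bot, add_zero] at this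

theorem rank_quotient_antitone {A B : Submodule K V} (h : A ≤ B) :
    Module.rank K (V ⧸ B) ≤ Module.rank K (V ⧸ A) :=
  LinearMap.rank_le_of_surjective _ (factor_surjective h)

theorem rank_le_rank_quotient_of_disjoint {A U : Submodule K V} (h : Disjoint A U) :
    Module.rank K A ≤ Module.rank K (V ⧸ U) := by
  obtain ⟨C, hAC, hCU⟩ := h.exists_isCompl
  rw [(quotientEquivOfIsCompl U C hCU.symm).rank_eq]
  exact rank_mono hAC

theorem rank_quotient_inf_le (X Y : Submodule K V) :
    Module.rank K (V ⧸ (X ⊓ Y)) ≤ Module.rank K (V ⧸ X) + Module.rank K (V ⧸ Y) := by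
  have hker : LinearMap.ker (X.mkQ.prod Y.mkQ) = X ⊓ Y := by
    rw [LinearMap.ker_prod, ker_mkQ, ker_mkQ]
  calc Module.rank K (V ⧸ (X ⊓ Y))
      = Module.rank K (LinearMap.range (X.mkQ.prod Y.mkQ)) := by
        rw [← hker, (LinearMap.quotKerEquivRange _).rank_eq]
    _ ≤ Module.rank K ((V ⧸ X) × (V ⧸ Y)) := rank_le _
    _ = Module.rank K (V ⧸ X) + Module.rank K (V ⧸ Y) := rank_prod'

theorem rank_le_rank_inf_add_rank_quotient (X Y : Submodule K V) :
    Module.rank K X ≤ Module.rank K ↥(X ⊓ Y) + Module.rank K (V ⧸ Y) := by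
  obtain ⟨D, hdisj, hsup⟩ := IsModularLattice.exists_disjoint_and_sup_eq (inf_le_left : X ⊓ Y ≤ X)
  have hDY : Disjoint D Y := by
    rw [disjoint_iff_inf_le]
    calc D ⊓ Y ≤ (X ⊓ Y) ⊓ D := le_inf (le_inf (inf_le_left.trans (hsup ▸ le_sup_right))
          inf_le_right) inf_le_left
      _ ≤ ⊥ := hdisj.le_bot
  calc Module.rank K X = Module.rank K ↥(X ⊓ Y) + Module.rank K D := by
        rw [← rank_sup_of_disjoint hdisj, hsup]
    _ ≤ _ := by gcongr; exact rank_le_rank_quotient_of_disjoint hDY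

theorem rank_quotient_eq_of_sup_eq {H C Z : Submodule K V} (hsup : H ⊔ C = Z)
    (hdisj : Disjoint H C) :
    Module.rank K (V ⧸ H) = Module.rank K C + Module.rank K (V ⧸ Z) := by
  obtain ⟨T, hZT⟩ := Submodule.exists_isCompl Z
  have hHCT : IsCompl H (C ⊔ T) :=
    ⟨hdisj.disjoint_sup_right_of_disjoint_sup_left (hsup ▸ hZT.disjoint),
      codisjoint_iff.2 (by rw [← sup_assoc, hsup, hZT.sup_eq_top])⟩
  have hCT : Disjoint C T := hZT.disjoint.mono_left (hsup ▸ le_sup_right)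
  rw [(quotientEquivOfIsCompl H _ hHCT).rank_eq, rank_sup_of_disjoint hCT,
    (quotientEquivOfIsCompl Z T hZT).rank_eq]

theorem exists_disjoint_rank_eq (D : Submodule K V) (hD : ℵ₀ ≤ Module.rank K D) :
    ∃ D₁ D₂ : Submodule K V, D₁ ≤ D ∧ D₂ ≤ D ∧ Disjoint D₁ D₂ ∧
      Module.rank K D₁ = Module.rank K D ∧ Module.rank K D₂ = Module.rank K D := by
  set ι := Module.Basis.ofVectorSpaceIndex K D
  let b : Module.Basis ι K D := Module.Basis.ofVectorSpace K D
  have hmk : #ι = Module.rank K D := b.mk_eq_rank''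
  obtain ⟨e⟩ : Nonempty (ι ⊕ ι ≃ ι) := Cardinal.eq.1 <| by
    rw [mk_sum, lift_id, hmk, add_eq_self hD]
  let v := fun i => (b (e i) : V)
  have hv : LinearIndependent K v :=
    (b.linearIndependent.map' D.subtype D.ker_subtype).comp e e.injective
  obtain ⟨hv₁, hv₂, hdisj⟩ := linearIndependent_sum.1 hv
  have hle : ∀ s : ι → ι ⊕ ι, Set.range (v ∘ s) ⊆ D := by
    rintro s _ ⟨i, rfl⟩
    exact (b (e (s i))).2
  have hrank : ∀ s : ι → ι ⊕ ι, Function.Injective s → LinearIndependent K (v ∘ s) →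
      Module.rank K (span K (Set.range (v ∘ s))) = Module.rank K D := fun s hs hvs => by
    rw [rank_span hvs, mk_range_eq _ (hv.injective.comp hs), hmk]
  exact ⟨_, _, span_le.2 (hle _), span_le.2 (hle _), hdisj,
    hrank _ Sum.inl_injective hv₁, hrank _ Sum.inr_injective hv₂⟩

end Rank

section Grassmannian

variable (K V) in
/-- `Gsub K V β` and `Gsup K V β` are, definitionally, `grassmannian K V β α` and
`grassmannian K V α β`. -/
def grassmannian (γ δ : Cardinal.{v}) : Set (Submodule K V) :=
  {X | Module.rank K X = γ ∧ Module.rank K (V ⧸ X) = δ}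

theorem exists_sup_span_singleton_eq {P Z : Submodule K V} (hPZ : P ≤ Z) {w : V} (hwZ : w ∈ Z)
    (hwP : w ∉ P) : ∃ H, P ≤ H ∧ H ⊔ K ∙ w = Z ∧ Disjoint H (K ∙ w) := by
  have hPw : Disjoint P (K ∙ w) := disjoint_span_singleton.2 (absurd · hwP)
  obtain ⟨H, hPH, hHw⟩ := hPw.exists_isCompl
  have hwZ' : K ∙ w ≤ Z := (span_singleton_le_iff_mem w Z).2 hwZ
  refine ⟨H ⊓ Z, le_inf hPH hPZ, ?_, hHw.disjoint.mono_left inf_le_left⟩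
  rw [sup_comm, ← sup_inf_assoc_of_le H hwZ', sup_comm, hHw.sup_eq_top, top_inf_eq]

theorem exists_mem_grassmannian_notMem {γ δ : Cardinal.{v}} (hγ : ℵ₀ ≤ γ) (hδ : ℵ₀ ≤ δ)
    {P Z : Submodule K V} (hZ : Z ∈ grassmannian K V γ δ) (hPZ : P ≤ Z) {w : V} (hwZ : w ∈ Z)
    (hwP : w ∉ P) : ∃ H ∈ grassmannian K V γ δ, P ≤ H ∧ H ≤ Z ∧ w ∉ H := by
  obtain ⟨H, hPH, hsup, hdisj⟩ := exists_sup_span_singleton_eq hPZ hwZ hwP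
  have hw : Module.rank K (K ∙ w) < ℵ₀ := Module.rank_lt_aleph0 K _
  refine ⟨H, ⟨?_, ?_⟩, hPH, hsup ▸ le_sup_left, fun hwH => hwP ?_⟩
  · refine eq_of_add_eq_of_aleph0_le ?_ (hw.trans_le hγ) hγ
    rw [add_comm, ← rank_sup_of_disjoint hdisj, hsup, hZ.1]
  · rw [rank_quotient_eq_of_sup_eq hsup hdisj, hZ.2, add_eq_right hδ (hw.le.trans hδ)]
  · rw [disjoint_span_singleton.1 hdisj hwH]
    exact P.zero_mem

theorem mem_of_forall_mem_grassmannian {γ δ : Cardinal.{v}} (hγ : ℵ₀ ≤ γ) (hδ : ℵ₀ ≤ δ)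
    {P Z₀ : Submodule K V} (hZ₀ : Z₀ ∈ grassmannian K V γ δ) (hPZ₀ : P ≤ Z₀) {w : V}
    (hw : ∀ Z ∈ grassmannian K V γ δ, P ≤ Z → Z ≤ Z₀ → w ∈ Z) : w ∈ P := by
  by_contra hwP
  obtain ⟨H, hH, hPH, hHZ₀, hwH⟩ :=
    exists_mem_grassmannian_notMem hγ hδ hZ₀ hPZ₀ (hw Z₀ hZ₀ hPZ₀ le_rfl) hwP
  exact hwH (hw H hH hPH hHZ₀)

end Grassmannian

theorem image_eq_biInter {γ δ : Cardinal.{v}} (hγ : ℵ₀ ≤ γ) (hδ : ℵ₀ ≤ δ)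
    {A P Z₀ : Submodule K V} (hZ₀ : Z₀ ∈ grassmannian K V γ δ) (hPZ₀ : P ≤ Z₀) (hZ₀A : Z₀ ≤ A)
    {g : A → V} (hg : Function.Injective g) {F : Submodule K V → Set V}
    (hgF : ∀ Z ∈ grassmannian K V γ δ, Z ≤ A → g '' {x | (x : V) ∈ Z} = F Z) :
    g '' {x | (x : V) ∈ P} = ⋂ Z ∈ {Z ∈ grassmannian K V γ δ | P ≤ Z ∧ Z ≤ Z₀}, F Z := by
  have hP : {x : A | (x : V) ∈ P} =
      ⋂ Z ∈ {Z ∈ grassmannian K V γ δ | P ≤ Z ∧ Z ≤ Z₀}, {x : A | (x : V) ∈ Z} := by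
    ext x
    simp only [Set.mem_iInter, Set.mem_ofPred_eq]
    exact ⟨fun hx Z hZ => hZ.2.1 hx, fun hx => mem_of_forall_mem_grassmannian hγ hδ hZ₀ hPZ₀
      fun Z hZ hPZ hZZ₀ => hx Z ⟨hZ, hPZ, hZZ₀⟩⟩
  rw [hP, hg.injOn.image_biInter_eq ⟨Z₀, hZ₀, hPZ₀, le_rfl⟩]
  exact Set.iInter₂_congr fun Z hZ => hgF Z hZ.1 (hZ.2.2.trans hZ₀A)

theorem image_eq_image_of_inf_mem {γ δ : Cardinal.{v}} (hγ : ℵ₀ ≤ γ) (hδ : ℵ₀ ≤ δ)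
    {f : Submodule K V → Submodule K V} {l : (X : Submodule K V) → X → V}
    (hinj : ∀ X ∈ grassmannian K V γ δ, Function.Injective (l X))
    (hcompat : ∀ X ∈ grassmannian K V γ δ, ∀ Z ∈ grassmannian K V γ δ, Z ≤ X →
      l X '' {x | (x : V) ∈ Z} = (f Z : Set V))
    {X U P : Submodule K V} (hX : X ∈ grassmannian K V γ δ) (hU : U ∈ grassmannian K V γ δ)
    (hXU : X ⊓ U ∈ grassmannian K V γ δ) (hP : P ≤ X ⊓ U) :
    l X '' {x | (x : V) ∈ P} = l U '' {u | (u : V) ∈ P} := by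
  rw [image_eq_biInter hγ hδ hXU hP inf_le_left (hinj X hX) (hcompat X hX),
    image_eq_biInter hγ hδ hXU hP inf_le_right (hinj U hU) (hcompat U hU)]

section Construction

variable {β : Cardinal.{v}} {X Y : Submodule K V}

theorem sup_mem_Gsub (hβ : ℵ₀ ≤ β) (hlt : β < Module.rank K V) (hX : X ∈ Gsub K V β)
    (hY : Y ∈ Gsub K V β) : X ⊔ Y ∈ Gsub K V β := by
  have hrank : Module.rank K ↥(X ⊔ Y) = β := by
    refine le_antisymm ?_ (hX.1 ▸ rank_mono le_sup_left)
    calc Module.rank K ↥(X ⊔ Y) ≤ Module.rank K X + Module.rank K Y :=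
          rank_add_le_rank_add_rank X Y
      _ = β := by rw [hX.1, hY.1, add_eq_self hβ]
  refine ⟨hrank, eq_of_add_eq_of_aleph0_le ?_ (hrank ▸ hlt) (hβ.trans hlt.le)⟩
  rw [add_comm, rank_quotient_add_rank]

theorem inf_mem_Gsup (hβ : ℵ₀ ≤ β) (hX : X ∈ Gsup K V β) (hY : Y ∈ Gsup K V β)
    (h : Module.rank K ↥(X ⊓ Y) = Module.rank K V) : X ⊓ Y ∈ Gsup K V β := by
  refine ⟨h, le_antisymm ?_ (hX.2 ▸ rank_quotient_antitone inf_le_left)⟩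
  calc Module.rank K (V ⧸ (X ⊓ Y)) ≤ Module.rank K (V ⧸ X) + Module.rank K (V ⧸ Y) :=
        rank_quotient_inf_le X Y
    _ = β := by rw [hX.2, hY.2, add_eq_self hβ]

theorem exists_mem_Gsup_rank_of_rank_inf_lt (hα : ℵ₀ ≤ Module.rank K V)
    (hX : X ∈ Gsup K V (Module.rank K V)) (hY : Y ∈ Gsup K V (Module.rank K V))
    (h : Module.rank K ↥(X ⊓ Y) < Module.rank K V) :
    ∃ U ∈ Gsup K V (Module.rank K V), X ⊓ Y ≤ U ∧
      X ⊓ U ∈ Gsup K V (Module.rank K V) ∧ Y ⊓ U ∈ Gsup K V (Module.rank K V) := by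
  obtain ⟨D, hSD, hSDX⟩ := IsModularLattice.exists_disjoint_and_sup_eq (inf_le_left : X ⊓ Y ≤ X)
  have hDX : D ≤ X := hSDX ▸ le_sup_right
  have hD : Module.rank K D = Module.rank K V :=
    eq_of_add_eq_of_aleph0_le (by rw [← rank_sup_of_disjoint hSD, hSDX, hX.1]) h hα
  obtain ⟨D₁, D₂, hD₁, hD₂, h12, hr₁, hr₂⟩ := exists_disjoint_rank_eq D (hD ▸ hα)
  have hXU : X ⊓ (D₁ ⊔ Y) = X ⊓ Y ⊔ D₁ := by
    rw [inf_comm, sup_inf_assoc_of_le Y (hD₁.trans hDX), inf_comm, sup_comm]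
  have hD₂U : Disjoint D₂ (D₁ ⊔ Y) := by
    have h' : Disjoint (X ⊓ Y ⊔ D₁) D₂ :=
      h12.disjoint_sup_left_of_disjoint_sup_right (hSD.mono_right (sup_le hD₁ hD₂))
    rw [disjoint_iff_inf_le]
    calc D₂ ⊓ (D₁ ⊔ Y) ≤ X ⊓ (D₁ ⊔ Y) ⊓ D₂ :=
          le_inf (le_inf (inf_le_left.trans (hD₂.trans hDX)) inf_le_right) inf_le_left
      _ ≤ ⊥ := hXU ▸ h'.le_bot
  refine ⟨D₁ ⊔ Y, ⟨le_antisymm (Submodule.rank_le _) (hY.1 ▸ rank_mono le_sup_right), ?_⟩,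
    inf_le_right.trans le_sup_right, ⟨?_, ?_⟩, by rwa [inf_of_le_left le_sup_right]⟩
  · exact le_antisymm (rank_quotient_le _)
      ((hr₂.trans hD).ge.trans (rank_le_rank_quotient_of_disjoint hD₂U))
  · rw [hXU]
    exact le_antisymm (Submodule.rank_le _) ((hr₁.trans hD).ge.trans (rank_mono le_sup_right))
  · exact le_antisymm (rank_quotient_le _) (hX.2.ge.trans (rank_quotient_antitone inf_le_left))

theorem exists_mem_Gsup_inf_mem (hβ : ℵ₀ ≤ β) (hβα : β ≤ Module.rank K V)
    (hX : X ∈ Gsup K V β) (hY : Y ∈ Gsup K V β) :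
    ∃ U ∈ Gsup K V β, X ⊓ Y ≤ U ∧ X ⊓ U ∈ Gsup K V β ∧ Y ⊓ U ∈ Gsup K V β := by
  by_cases h : Module.rank K ↥(X ⊓ Y) = Module.rank K V
  · have hI := inf_mem_Gsup hβ hX hY h
    exact ⟨X ⊓ Y, hI, le_rfl, by rwa [inf_of_le_right inf_le_left],
      by rwa [inf_of_le_right inf_le_right]⟩
  · have hlt : Module.rank K ↥(X ⊓ Y) < Module.rank K V := (Submodule.rank_le _).lt_of_ne h
    obtain rfl : β = Module.rank K V := hβα.eq_of_not_lt fun hβlt =>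
      (rank_le_rank_inf_add_rank_quotient X Y).not_gt <| by
        rw [hX.1, hY.2]
        exact add_lt_of_lt (hβ.trans hβα) hlt hβlt
    exact exists_mem_Gsup_rank_of_rank_inf_lt hβ hX hY hlt

theorem exists_mem_inf_mem (hβ : ℵ₀ ≤ β) (hβα : β ≤ Module.rank K V) {G : Set (Submodule K V)}
    (hG : G = Gsub K V β ∨ G = Gsup K V β) (hX : X ∈ G) (hY : Y ∈ G) :
    ∃ U ∈ G, X ⊓ Y ≤ U ∧ X ⊓ U ∈ G ∧ Y ⊓ U ∈ G := by
  rcases hG with rfl | rfl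
  · rcases hβα.lt_or_eq with hlt | rfl
    · exact ⟨X ⊔ Y, sup_mem_Gsub hβ hlt hX hY, inf_le_left.trans le_sup_left,
        by rwa [inf_sup_self], by rwa [inf_of_le_left le_sup_right]⟩
    · exact exists_mem_Gsup_inf_mem hβ le_rfl hX hY
  · exact exists_mem_Gsup_inf_mem hβ hβα hX hY

end Construction

theorem stmt12_general
    (β : Cardinal.{v}) (hβinf : Cardinal.aleph0 ≤ β) (hβ : β ≤ Module.rank K V)
    (G : Set (Submodule K V)) (hG : G = Gsub K V β ∨ G = Gsup K V β)
    (f : Submodule K V → Submodule K V)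
    (l : (X : Submodule K V) → ↥X → V)
    (hinj : ∀ X ∈ G, Function.Injective (l X))
    (hcompat : ∀ X ∈ G, ∀ Z ∈ G, Z ≤ X →
      l X '' {x : ↥X | (x : V) ∈ Z} = ((f Z : Submodule K V) : Set V)) :
    ∀ X ∈ G, ∀ Y ∈ G, X ⊓ Y ≠ ⊥ →
      ∀ P : Submodule K V, Module.rank K ↥P = 1 → P ≤ X ⊓ Y →
        l X '' {x : ↥X | (x : V) ∈ P} = l Y '' {y : ↥Y | (y : V) ∈ P} := by
  intro X hX Y hY _ P _ hP
  obtain ⟨U, hU, hXYU, hXU, hYU⟩ := exists_mem_inf_mem hβinf hβ hG hX hY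
  obtain ⟨γ, δ, hγ, hδ, rfl⟩ : ∃ γ δ, ℵ₀ ≤ γ ∧ ℵ₀ ≤ δ ∧ G = grassmannian K V γ δ :=
    hG.elim (fun h => ⟨_, _, hβinf, hβinf.trans hβ, h⟩)
      (fun h => ⟨_, _, hβinf.trans hβ, hβinf, h⟩)
  have hPU : P ≤ U := hP.trans hXYU
  rw [image_eq_image_of_inf_mem hγ hδ hinj hcompat hX hU hXU (le_inf (hP.trans inf_le_left) hPU),
    image_eq_image_of_inf_mem hγ hδ hinj hcompat hY hU hYU (le_inf (hP.trans inf_le_right) hPU)]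

/-- Lemma 6: given a family of semilinear isomorphisms `l_X : X → f(X)` (for `X ∈ G`)
compatible with `f` on elements of `G` contained in `X`, any two of them agree on every
`1`-dimensional subspace of a nonzero intersection `X ∩ Y`. -/
theorem stmt12 (hα : Cardinal.aleph0 ≤ Module.rank K V)
    (β : Cardinal.{v}) (hβinf : Cardinal.aleph0 ≤ β) (hβ : β ≤ Module.rank K V)
    (G : Set (Submodule K V)) (hG : G = Gsub K V β ∨ G = Gsup K V β)
    (f : Submodule K V → Submodule K V) (hbij : Set.BijOn f G G)
    (l : (X : Submodule K V) → ↥X → V)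
    (hadd : ∀ X ∈ G, ∀ x y : ↥X, l X (x + y) = l X x + l X y)
    (hsemi : ∀ X ∈ G, ∃ σ : K ≃+* K, ∀ (a : K) (x : ↥X), l X (a • x) = σ a • l X x)
    (hinj : ∀ X ∈ G, Function.Injective (l X))
    (hrange : ∀ X ∈ G, Set.range (l X) = ((f X : Submodule K V) : Set V))
    (hcompat : ∀ X ∈ G, ∀ Z ∈ G, Z ≤ X →
      l X '' {x : ↥X | (x : V) ∈ Z} = ((f Z : Submodule K V) : Set V)) :
    ∀ X ∈ G, ∀ Y ∈ G, X ⊓ Y ≠ ⊥ →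
      ∀ P : Submodule K V, Module.rank K ↥P = 1 → P ≤ X ⊓ Y →
        l X '' {x : ↥X | (x : V) ∈ P} = l Y '' {y : ↥Y | (y : V) ∈ P} :=
  stmt12_general β hβinf hβ G hG f l hinj hcompat
end

section
/- Let β ≤ α be a cardinal and let G be one of the Grassmannians G_β(V) or G^β(V). For any two elements X, Y ∈ G there is an apartment of G containing both, i.e., there exists a basis B of V such that X and Y are each spanned by a subset of B. -/
/- Setting: `V` is a left vector space over a division ring `K` whose dimension
`α = Module.rank K V` is an infinite cardinal. -/

universe u v w

variable {K : Type u} {V : Type v} [DivisionRing K] [AddCommGroup V] [Module K V]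


open Submodule Set in
private lemma disjoint_span_of_subsets {u s t : Set V}
    (h : LinearIndependent K ((↑) : u → V)) (hs : s ⊆ u) (ht : t ⊆ u)
    (hst : Disjoint s t) :
    Disjoint (Submodule.span K s) (Submodule.span K t) := by
  have := h.disjoint_span_image (s := ((↑) : u → V) ⁻¹' s) (t := ((↑) : u → V) ⁻¹' t)
    (hst.preimage _)
  rwa [Subtype.image_preimage_coe, Subtype.image_preimage_coe,
    Set.inter_eq_right.mpr hs, Set.inter_eq_right.mpr ht] at this

open Submodule in
/-- Any two submodules admit a common adapted basis. -/
private lemma exists_common_basis (X Y : Submodule K V) :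
    ∃ B : Set V, IsBasisSet K V B ∧ (∃ S ⊆ B, X = Submodule.span K S) ∧
      (∃ S ⊆ B, Y = Submodule.span K S) := by
  -- basis of X ⊓ Y
  obtain ⟨s0, hs0sub, hs0span, hs0li⟩ := exists_linearIndependent K ((X ⊓ Y : Submodule K V) : Set V)
  rw [Submodule.span_eq] at hs0span
  -- extend to X
  obtain ⟨sX, hsXsub, hs0X, hXsub, hsXli⟩ := exists_linearIndepOn_id_extension hs0li
    (hs0sub.trans (by exact_mod_cast inf_le_left))
  have hsXspan : Submodule.span K sX = X := by
    refine le_antisymm (Submodule.span_le.mpr hsXsub) ?_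
    conv_lhs => rw [← Submodule.span_eq X]
    exact Submodule.span_le.mpr hXsub
  -- extend to Y
  obtain ⟨sY, hsYsub, hs0Y, hYsub, hsYli⟩ := exists_linearIndepOn_id_extension hs0li
    (hs0sub.trans (by exact_mod_cast inf_le_right))
  have hsYspan : Submodule.span K sY = Y := by
    refine le_antisymm (Submodule.span_le.mpr hsYsub) ?_
    conv_lhs => rw [← Submodule.span_eq Y]
    exact Submodule.span_le.mpr hYsub
  set s1 : Set V := sY \ s0 with hs1
  have hs0s1 : s0 ∪ s1 = sY := Set.union_diff_cancel hs0Y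
  -- Disjoint X (span s1)
  have hdisj : Disjoint X (Submodule.span K s1) := by
    rw [Submodule.disjoint_def]
    intro v hvX hvs1
    have hvY : v ∈ Y := hsYspan ▸ Submodule.span_mono Set.diff_subset hvs1
    have hv0 : v ∈ Submodule.span K s0 := hs0span ▸ Submodule.mem_inf.mpr ⟨hvX, hvY⟩
    have hd : Disjoint (Submodule.span K s0) (Submodule.span K s1) :=
      disjoint_span_of_subsets hsYli hs0Y Set.diff_subset disjoint_sdiff_self_right
    exact Submodule.disjoint_def.mp hd v hv0 hvs1
  -- sX ∪ s1 is linearly independent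
  have hli : LinearIndependent K ((↑) : ↥(sX ∪ s1) → V) := by
    refine hsXli.union (hsYli.mono Set.diff_subset) ?_
    rwa [Set.image_id, Set.image_id, hsXspan]
  -- extend to a basis of V
  obtain ⟨B, -, hsubB, htB, hBli⟩ := exists_linearIndepOn_id_extension hli
    (Set.subset_univ _)
  have hBspan : Submodule.span K B = ⊤ := by
    rw [eq_top_iff, ← Submodule.span_univ (R := K)]
    exact Submodule.span_le.mpr htB
  refine ⟨B, ⟨hBli, hBspan⟩, ⟨sX, (Set.subset_union_left).trans hsubB, hsXspan.symm⟩,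
    ⟨sY, ?_, hsYspan.symm⟩⟩
  rw [← hs0s1]
  exact Set.union_subset ((hs0X.trans Set.subset_union_left).trans hsubB)
    ((Set.subset_union_right).trans hsubB)

/-- Any two elements of a Grassmannian `G` lie in a common apartment. -/
theorem stmt13 (hα : Cardinal.aleph0 ≤ Module.rank K V)
    (β : Cardinal.{v}) (hβ : β ≤ Module.rank K V)
    (G : Set (Submodule K V)) (hG : G = Gsub K V β ∨ G = Gsup K V β) :
    ∀ X ∈ G, ∀ Y ∈ G, ∃ B : Set V, IsBasisSet K V B ∧
      X ∈ apartmentOf K V G B ∧ Y ∈ apartmentOf K V G B := by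
  intro X hX Y hY
  obtain ⟨B, hB, hXB, hYB⟩ := exists_common_basis X Y
  exact ⟨B, hB, ⟨hX, hXB⟩, ⟨hY, hYB⟩⟩
end

section
/- Let β ≤ α be an infinite cardinal and let G be one of the Grassmannians G_β(V) or G^β(V). Then for all X, Y ∈ G, X and Y lie in the same connected component of the Grassmann graph Γ(G) if and only if dim X/(X∩Y) = dim Y/(X∩Y) and this common dimension is finite. -/
/- Setting: `V` is a left vector space over a division ring `K` whose dimension
`α = Module.rank K V` is an infinite cardinal. -/

universe u v w

section Defs

variable (K : Type u) (V : Type v) [DivisionRing K] [AddCommGroup V] [Module K V]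

/-- `X` and `Y` lie in the same connected component of the Grassmann graph `Γ(G)`:
they are joined by a finite path of adjacent elements of `G`. -/
def SameComponent (G : Set (Submodule K V)) (X Y : Submodule K V) : Prop :=
  Relation.ReflTransGen (fun A B => A ∈ G ∧ B ∈ G ∧ AdjacentSub K V A B) X Y

/-- `C` is a connected component of the Grassmann graph `Γ(G)`. -/
def IsConnComponent (G : Set (Submodule K V)) (C : Set (Submodule K V)) : Prop :=
  ∃ X ∈ G, C = {Y | Y ∈ G ∧ SameComponent K V G X Y}

end Defs

variable {K : Type u} {V : Type v} [DivisionRing K] [AddCommGroup V] [Module K V]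

/-
Adjacent subspaces `X, Z` satisfy `dim X/(X∩Z) = dim Z/(X∩Z) = 1`, and the relation
`dim X/(X∩Y) = dim Y/(X∩Y) < ∞` is transitive: measured from `W = X ∩ Y ∩ Z`, the relative
dimensions of `X`, `Y`, `Z` agree and are finite, and finite cardinals can be cancelled.
Hence the relation holds along every path of the Grassmann graph.

Conversely, if both relative dimensions are `n + 1`, take a hyperplane `H` of `X` containing
`X ∩ Y` and a vector `y ∈ Y \ X`. Then `Z = H + ⟨y⟩` is adjacent to `X`, so it has the same
dimension and codimension and lies in the same Grassmannian, and `Z ∩ Y = (X ∩ Y) + ⟨y⟩` has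
codimension `n` in both `Z` and `Y`.
-/

namespace Submodule

variable {M : Type*} [AddCommGroup M] [Module K M]

noncomputable def relRank (p q : Submodule K M) : Cardinal :=
  Module.rank K (q ⧸ p.comap q.subtype)

theorem relRank_eq_rank_map_mkQ (p q : Submodule K M) :
    p.relRank q = Module.rank K (q.map p.mkQ) := by
  have e := (p.mkQ ∘ₗ q.subtype).quotKerEquivRange
  rw [LinearMap.ker_comp, ker_mkQ, LinearMap.range_comp, range_subtype] at e
  exact e.rank_eq

theorem rank_quotient_eq_add_relRank {p q : Submodule K M} (h : p ≤ q) :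
    Module.rank K (M ⧸ p) = Module.rank K (M ⧸ q) + p.relRank q := by
  rw [relRank_eq_rank_map_mkQ, ← (quotientQuotientEquivQuotient p q h).rank_eq]
  exact (rank_quotient_add_rank _).symm

theorem relRank_add_rank {p q : Submodule K M} (h : p ≤ q) :
    p.relRank q + Module.rank K p = Module.rank K q := by
  rw [relRank, ← (comapSubtypeEquivOfLe h).rank_eq]
  exact rank_quotient_add_rank _

theorem bot_relRank (q : Submodule K M) : (⊥ : Submodule K M).relRank q = Module.rank K q := by
  simpa using relRank_add_rank (bot_le : ⊥ ≤ q)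

theorem relRank_comap_subtype (p : Submodule K M) {q r : Submodule K M} (hqr : q ≤ r) :
    (p.comap r.subtype).relRank (q.comap r.subtype) = p.relRank q := by
  have hmap : ((p.comap r.subtype).comap (q.comap r.subtype).subtype).map
      (comapSubtypeEquivOfLe hqr : q.comap r.subtype →ₗ[K] q) = p.comap q.subtype := by
    ext x
    constructor
    · rintro ⟨y, hy, rfl⟩
      simpa using hy
    · intro hx
      exact ⟨⟨⟨x, hqr x.2⟩, x.2⟩, by simpa using hx, rfl⟩
  exact (Quotient.equiv _ _ _ hmap).rank_eq

theorem relRank_add_relRank {p q r : Submodule K M} (hpq : p ≤ q) (hqr : q ≤ r) :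
    p.relRank q + q.relRank r = p.relRank r := by
  have h := rank_quotient_eq_add_relRank (comap_mono (f := r.subtype) hpq)
  rw [relRank_comap_subtype p hqr] at h
  rw [add_comm]
  exact h.symm

theorem relRank_eq_zero_iff {p q : Submodule K M} : p.relRank q = 0 ↔ q ≤ p := by
  rw [relRank, rank_zero_iff, Quotient.subsingleton_iff, comap_subtype_eq_top]

theorem inf_relRank_eq_relRank_sup (p q : Submodule K M) :
    (p ⊓ q).relRank p = q.relRank (p ⊔ q) :=
  (LinearMap.quotientInfEquivSupQuotient p q).rank_eq

theorem inf_relRank_le {p q r : Submodule K M} (hp : p ≤ r) (hq : q ≤ r) :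
    (p ⊓ q).relRank p ≤ q.relRank r := by
  rw [inf_relRank_eq_relRank_sup, ← relRank_add_relRank le_sup_right (sup_le hp hq)]
  exact self_le_add_right _ _

theorem relRank_sup_span_singleton {p : Submodule K M} {y : M} (hy : y ∉ p) :
    p.relRank (p ⊔ K ∙ y) = 1 := by
  have hy0 : y ≠ 0 := fun h => hy (h ▸ p.zero_mem)
  rw [sup_comm, ← inf_relRank_eq_relRank_sup, (disjoint_span_singleton_of_notMem hy).symm.eq_bot,
    bot_relRank, ← Module.finrank_eq_rank, finrank_span_singleton hy0, Nat.cast_one]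

theorem exists_relRank_eq_one_of_lt {p q : Submodule K M} (hpq : p < q) :
    ∃ H, p ≤ H ∧ H ≤ q ∧ H.relRank q = 1 := by
  obtain ⟨x, hxq, hxp⟩ := SetLike.exists_of_lt hpq
  obtain ⟨f, hfx, hpf⟩ := exists_le_ker_of_notMem hxp
  have hxH : x ∉ q ⊓ LinearMap.ker f := fun h => hfx h.2
  have hq : q ⊓ LinearMap.ker f ⊔ K ∙ x = q := by
    refine le_antisymm (sup_le inf_le_left (span_singleton_le_iff_mem _ _ |>.mpr hxq)) ?_
    intro v hv
    set c := f v * (f x)⁻¹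
    have hc : v - c • x ∈ q ⊓ LinearMap.ker f :=
      ⟨q.sub_mem hv (q.smul_mem c hxq), by simp [c, inv_mul_cancel_right₀ hfx]⟩
    exact mem_sup.mpr ⟨_, hc, c • x, smul_mem _ c (mem_span_singleton_self x), sub_add_cancel v _⟩
  refine ⟨q ⊓ LinearMap.ker f, le_inf hpq.le hpf, inf_le_left, ?_⟩
  simpa only [hq] using relRank_sup_span_singleton hxH

def EvenlyCommensurable (X Y : Submodule K M) : Prop :=
  (X ⊓ Y).relRank X = (X ⊓ Y).relRank Y ∧ (X ⊓ Y).relRank X < Cardinal.aleph0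

theorem EvenlyCommensurable.relRank_eq {X Y W : Submodule K M} (h : EvenlyCommensurable X Y)
    (hW : W ≤ X ⊓ Y) : W.relRank X = W.relRank Y := by
  rw [← relRank_add_relRank hW inf_le_left, ← relRank_add_relRank hW inf_le_right, h.1]

theorem evenlyCommensurable_of_le_inf {X Y W : Submodule K M} (hW : W ≤ X ⊓ Y)
    (h : W.relRank X = W.relRank Y) (hfin : W.relRank X < Cardinal.aleph0) :
    EvenlyCommensurable X Y := by
  rw [← relRank_add_relRank hW inf_le_left] at h hfin
  rw [← relRank_add_relRank hW inf_le_right] at h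
  have hWfin : W.relRank (X ⊓ Y) < Cardinal.aleph0 := (self_le_add_right _ _).trans_lt hfin
  refine ⟨?_, (self_le_add_left _ _).trans_lt hfin⟩
  rwa [add_comm, add_comm (W.relRank _), Cardinal.add_right_inj_of_lt_aleph0 hWfin] at h

theorem evenlyCommensurable_refl (X : Submodule K M) : EvenlyCommensurable X X :=
  ⟨rfl, by rw [relRank_eq_zero_iff.mpr (le_inf le_rfl le_rfl)]; exact Cardinal.aleph0_pos⟩

theorem EvenlyCommensurable.trans {X Y Z : Submodule K M} (hXY : EvenlyCommensurable X Y)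
    (hYZ : EvenlyCommensurable Y Z) : EvenlyCommensurable X Z := by
  set W := Y ⊓ Z ⊓ (X ⊓ Y)
  have hWXY : W ≤ X ⊓ Y := inf_le_right
  have hWYZ : W ≤ Y ⊓ Z := inf_le_left
  have hWY_fin : W.relRank Y < Cardinal.aleph0 := by
    rw [← relRank_add_relRank hWYZ inf_le_left]
    exact Cardinal.add_lt_aleph0
      ((inf_relRank_le inf_le_left inf_le_right).trans_lt (hXY.1 ▸ hXY.2)) hYZ.2
  have hXYZ := (hXY.relRank_eq hWXY).trans (hYZ.relRank_eq hWYZ)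
  exact evenlyCommensurable_of_le_inf (le_inf (hWXY.trans inf_le_left) (hWYZ.trans inf_le_right))
    hXYZ (hXY.relRank_eq hWXY ▸ hWY_fin)

end Submodule

open Submodule

theorem adjacentSub_iff {X Y : Submodule K V} :
    AdjacentSub K V X Y ↔ (X ⊓ Y).relRank X = 1 ∧ (X ⊓ Y).relRank Y = 1 :=
  Iff.rfl

theorem AdjacentSub.evenlyCommensurable {X Y : Submodule K V} (h : AdjacentSub K V X Y) :
    EvenlyCommensurable X Y := by
  obtain ⟨hX, hY⟩ := adjacentSub_iff.mp h
  exact ⟨hX.trans hY.symm, hX ▸ Cardinal.one_lt_aleph0⟩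

theorem AdjacentSub.rank_eq {X Y : Submodule K V} (h : AdjacentSub K V X Y) :
    Module.rank K X = Module.rank K Y := by
  rw [← relRank_add_rank (inf_le_left : X ⊓ Y ≤ X), ← relRank_add_rank (inf_le_right : X ⊓ Y ≤ Y)]
  exact congrArg (· + _) (h.1.trans h.2.symm)

theorem AdjacentSub.rank_quotient_eq {X Y : Submodule K V} (h : AdjacentSub K V X Y) :
    Module.rank K (V ⧸ X) = Module.rank K (V ⧸ Y) := by
  obtain ⟨h1, h2⟩ := adjacentSub_iff.mp h
  have hX := rank_quotient_eq_add_relRank (inf_le_left : X ⊓ Y ≤ X)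
  have hY := rank_quotient_eq_add_relRank (inf_le_right : X ⊓ Y ≤ Y)
  rw [h1] at hX
  rw [h2] at hY
  exact Cardinal.add_one_inj.mp (hX.symm.trans hY)

theorem AdjacentSub.mem_of_mem {β : Cardinal.{v}} {G : Set (Submodule K V)}
    (hG : G = Gsub K V β ∨ G = Gsup K V β) {X Y : Submodule K V} (h : AdjacentSub K V X Y)
    (hX : X ∈ G) : Y ∈ G := by
  rcases hG with rfl | rfl
  · exact ⟨h.rank_eq ▸ hX.1, h.rank_quotient_eq ▸ hX.2⟩
  · exact ⟨h.rank_eq ▸ hX.1, h.rank_quotient_eq ▸ hX.2⟩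

theorem SameComponent.evenlyCommensurable {G : Set (Submodule K V)} {X Y : Submodule K V}
    (h : SameComponent K V G X Y) : EvenlyCommensurable X Y := by
  induction h with
  | refl => exact evenlyCommensurable_refl X
  | tail _ hAB ih => exact ih.trans hAB.2.2.evenlyCommensurable

theorem exists_adjacentSub_relRank_eq {X Y : Submodule K V} {n : ℕ}
    (hX : (X ⊓ Y).relRank X = n + 1) (hY : (X ⊓ Y).relRank Y = n + 1) :
    ∃ Z, AdjacentSub K V X Z ∧ (Z ⊓ Y).relRank Z = n ∧ (Z ⊓ Y).relRank Y = n := by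
  set W := X ⊓ Y
  have hne : ∀ {q : Submodule K V}, W.relRank q = n + 1 → ¬q ≤ W := fun hq hle => by
    rw [relRank_eq_zero_iff.mpr hle] at hq
    exact Nat.cast_add_one_ne_zero n hq.symm
  obtain ⟨H, hWH, hHX, hHX1⟩ :=
    exists_relRank_eq_one_of_lt (lt_of_le_not_ge inf_le_left (hne hX))
  obtain ⟨y, hyY, hyW⟩ := SetLike.not_le_iff_exists.mp (hne hY)
  have hyX : y ∉ X := fun h => hyW ⟨h, hyY⟩
  have hsY : K ∙ y ≤ Y := (span_singleton_le_iff_mem _ _).mpr hyY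
  set Z := H ⊔ K ∙ y
  have hXZ : X ⊓ Z = H := by
    rw [inf_comm, sup_inf_assoc_of_le _ hHX,
      (disjoint_span_singleton_of_notMem hyX).symm.eq_bot, sup_bot_eq]
  have hZY : Z ⊓ Y = W ⊔ K ∙ y := by
    have hHY : H ⊓ Y = W := le_antisymm (inf_le_inf_right Y hHX) (le_inf hWH inf_le_right)
    rw [show Z = K ∙ y ⊔ H from sup_comm _ _, sup_inf_assoc_of_le _ hsY, hHY, sup_comm]
  have hHZ1 : H.relRank Z = 1 := relRank_sup_span_singleton fun h => hyX (hHX h)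
  have hWs1 : W.relRank (W ⊔ K ∙ y) = 1 := relRank_sup_span_singleton hyW
  have hWHn : W.relRank H = n := by
    rw [← relRank_add_relRank hWH hHX, hHX1] at hX
    exact Cardinal.add_one_inj.mp hX
  have hWsZ : W ⊔ K ∙ y ≤ Z := sup_le_sup_right hWH _
  refine ⟨Z, adjacentSub_iff.mpr ⟨hXZ ▸ hHX1, hXZ ▸ hHZ1⟩, hZY ▸ ?_, hZY ▸ ?_⟩
  · have hWZ := (relRank_add_relRank le_sup_left hWsZ).trans
      (relRank_add_relRank hWH le_sup_left).symm
    rw [hWs1, hHZ1, hWHn, add_comm] at hWZ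
    exact Cardinal.add_one_inj.mp hWZ
  · rw [← relRank_add_relRank le_sup_left (sup_le inf_le_right hsY), hWs1, add_comm] at hY
    exact Cardinal.add_one_inj.mp hY

theorem sameComponent_of_relRank_eq_nat {G : Set (Submodule K V)}
    (hG : ∀ X ∈ G, ∀ Z, AdjacentSub K V X Z → Z ∈ G) (n : ℕ) {X Y : Submodule K V}
    (hXG : X ∈ G) (hX : (X ⊓ Y).relRank X = n) (hY : (X ⊓ Y).relRank Y = n) :
    SameComponent K V G X Y := by
  induction n generalizing X with
  | zero =>
    rw [Nat.cast_zero, relRank_eq_zero_iff] at hX hY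
    rw [le_antisymm (hX.trans inf_le_right) (hY.trans inf_le_left)]
    exact Relation.ReflTransGen.refl
  | succ n ih =>
    rw [Nat.cast_succ] at hX hY
    obtain ⟨Z, hXZ, hZ, hZY⟩ := exists_adjacentSub_relRank_eq hX hY
    have hZG := hG X hXG Z hXZ
    exact Relation.ReflTransGen.head ⟨hXG, hZG, hXZ⟩ (ih hZG hZ hZY)

theorem stmt18_general
    (β : Cardinal.{v})
    (G : Set (Submodule K V)) (hG : G = Gsub K V β ∨ G = Gsup K V β) :
    ∀ X ∈ G, ∀ Y ∈ G,
      (SameComponent K V G X Y ↔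
        (Module.rank K (↥X ⧸ Submodule.comap X.subtype (X ⊓ Y)) =
          Module.rank K (↥Y ⧸ Submodule.comap Y.subtype (X ⊓ Y)) ∧
        Module.rank K (↥X ⧸ Submodule.comap X.subtype (X ⊓ Y)) < Cardinal.aleph0)) := by
  intro X hX Y _
  refine ⟨SameComponent.evenlyCommensurable, fun ⟨heq, hfin⟩ => ?_⟩
  obtain ⟨n, hn⟩ := Cardinal.lt_aleph0.mp hfin
  exact sameComponent_of_relRank_eq_nat (fun _ hA _ hAZ => hAZ.mem_of_mem hG hA) n hX hn
    (heq.symm.trans hn)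

/-- For infinite `β`, two elements `X, Y` of `G` lie in the same connected component
of the Grassmann graph if and only if `dim X/(X∩Y) = dim Y/(X∩Y) < ∞`. -/
theorem stmt18 (hα : Cardinal.aleph0 ≤ Module.rank K V)
    (β : Cardinal.{v}) (hβinf : Cardinal.aleph0 ≤ β) (hβ : β ≤ Module.rank K V)
    (G : Set (Submodule K V)) (hG : G = Gsub K V β ∨ G = Gsup K V β) :
    ∀ X ∈ G, ∀ Y ∈ G,
      (SameComponent K V G X Y ↔
        (Module.rank K (↥X ⧸ Submodule.comap X.subtype (X ⊓ Y)) =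
          Module.rank K (↥Y ⧸ Submodule.comap Y.subtype (X ⊓ Y)) ∧
        Module.rank K (↥X ⧸ Submodule.comap X.subtype (X ⊓ Y)) < Cardinal.aleph0)) :=
  stmt18_general β G hG
end
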